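/- Let Y ∈ ℝ^{D×N} with 1 ≤ K ≤ D, and let p be a probability mass function on {1,…,K} with p(b) > 0 for every b. If (X*, Γ*) ∈ ℝ^{K×N} × ℝ^{D×K} is a global minimizer of the nested dropout cost C(X,Γ) = Σ_{b=1}^{K} p(b)·‖Y − Γ^{(b)} X^{(b)}‖_F², then for every b ∈ {1,…,K}, (X*, Γ*) is a global minimizer of the b-truncation cost C^{(b)}(X,Γ) = ‖Y − Γ^{(b)} X^{(b)}‖_F² over all X ∈ ℝ^{K×N}, Γ ∈ ℝ^{D×K}. -/

import Mathlib

open Matrix BigOperators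

/-- The `b`-truncation cost `C⁽ᵇ⁾(X,Γ) = ‖Y − Γ⁽ᵇ⁾ X⁽ᵇ⁾‖_F²`, where `Γ⁽ᵇ⁾ X⁽ᵇ⁾`
uses only the first `b` columns of `Γ` and first `b` rows of `X`. -/
noncomputable def truncCost {D N K : ℕ} (Y : Matrix (Fin D) (Fin N) ℝ)
    (X : Matrix (Fin K) (Fin N) ℝ) (G : Matrix (Fin D) (Fin K) ℝ) (b : ℕ) : ℝ :=
  ∑ i, ∑ j, (Y i j - ∑ k : Fin K, if (k : ℕ) < b then G i k * X k j else 0) ^ 2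

/-- The nested dropout cost: mixture of the `b`-truncation costs, `b = 1, …, K`,
with mixing weights `p`. Here `b : Fin K` represents the truncation index `b+1`. -/
noncomputable def ndCost {D N K : ℕ} (Y : Matrix (Fin D) (Fin N) ℝ) (p : Fin K → ℝ)
    (X : Matrix (Fin K) (Fin N) ℝ) (G : Matrix (Fin D) (Fin K) ℝ) : ℝ :=
  ∑ b : Fin K, p b * truncCost Y X G ((b : ℕ) + 1)

/-!
The top eigenvectors of the scatter operator `Y Yᵀ` minimize every truncation cost at once
(Eckart–Young). For any `Γ`, the `b`-truncated reconstructions of the columns `yⱼ` of `Y` lie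
in a subspace of dimension at most `b`, so the error is at least `∑ⱼ ‖yⱼ‖²` minus the energy
captured by an orthonormal basis of that subspace; by Ky Fan's maximum principle this energy is at
most the sum of the `b` largest eigenvalues, which the first `b` eigenvectors attain. A minimizer
of the nested dropout cost that missed the optimum of one truncation cost could then be replaced
by this common minimizer, lowering that term, raising none, and (all weights being positive)
lowering the sum.
-/

open Finset
open scoped RealInnerProductSpace

theorem Fin.sum_ite_val_lt {M : Type*} [AddCommMonoid M] {K b : ℕ} (hb : b ≤ K) (f : Fin K → M) :
    (∑ k : Fin K, if (k : ℕ) < b then f k else 0) = ∑ k : Fin b, f (Fin.castLE hb k) := by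
  rw [← sum_filter]
  refine sum_bij' (fun k hk => ⟨k, (mem_filter.mp hk).2⟩) (fun k _ => Fin.castLE hb k)
    ?_ ?_ ?_ ?_ ?_ <;> simp [Fin.castLE]

theorem sum_mul_le_sum_ite_lt_of_antitone {D b : ℕ} {μ t : Fin D → ℝ} (hμ : Antitone μ)
    (hμ0 : ∀ i, 0 ≤ μ i) (ht0 : ∀ i, 0 ≤ t i) (ht1 : ∀ i, t i ≤ 1) (htb : ∑ i, t i ≤ b) :
    ∑ i, μ i * t i ≤ ∑ i : Fin D, if (i : ℕ) < b then μ i else 0 := by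
  rcases le_or_gt D b with hDb | hbD
  · rw [sum_congr rfl fun i _ => if_pos (i.2.trans_le hDb)]
    exact sum_le_sum fun i _ => mul_le_of_le_one_right (hμ0 i) (ht1 i)
  · -- `c = μ b` separates the `b` largest values of `μ` from the others
    set c := μ ⟨b, hbD⟩
    have hpt (i : Fin D) : μ i * t i - (if (i : ℕ) < b then μ i else 0)
        ≤ c * (t i - if (i : ℕ) < b then 1 else 0) := by
      split_ifs with h
      · nlinarith [hμ (show i ≤ ⟨b, hbD⟩ from Fin.le_def.mpr h.le), ht1 i]
      · nlinarith [hμ (show ⟨b, hbD⟩ ≤ i from Fin.le_def.mpr (not_lt.mp h)), ht0 i]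
    have hcard : (∑ i : Fin D, if (i : ℕ) < b then (1 : ℝ) else 0) = b := by
      simp [Fin.sum_ite_val_lt hbD.le]
    have := sum_le_sum fun i (_ : i ∈ univ) => hpt i
    rw [sum_sub_distrib, ← mul_sum, sum_sub_distrib, hcard] at this
    nlinarith [hμ0 ⟨b, hbD⟩]

section InnerProductSpace

variable {E : Type*} [NormedAddCommGroup E] [InnerProductSpace ℝ E]

theorem Orthonormal.norm_sub_sum_smul_sq {ι : Type*} [Fintype ι] {e : ι → E}
    (he : Orthonormal ℝ e) (y : E) (c : ι → ℝ) :
    ‖y - ∑ k, c k • e k‖ ^ 2 = ‖y‖ ^ 2 - ∑ k, ⟪e k, y⟫ ^ 2 + ∑ k, (c k - ⟪e k, y⟫) ^ 2 := by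
  have hcross : ⟪y, ∑ k, c k • e k⟫ = ∑ k, c k * ⟪e k, y⟫ := by
    simp only [inner_sum, real_inner_smul_right, real_inner_comm]
  have hnorm : ‖∑ k, c k • e k‖ ^ 2 = ∑ k, c k ^ 2 := by
    rw [← real_inner_self_eq_norm_sq, he.inner_sum]
    simp [sq]
  rw [norm_sub_sq_real, hcross, hnorm]
  simp only [sub_sq, sum_add_distrib, sum_sub_distrib, mul_sum]
  ring_nf

theorem Orthonormal.norm_sq_sub_sum_inner_sq_le {ι : Type*} [Fintype ι] {e : ι → E}
    (he : Orthonormal ℝ e) (y : E) (c : ι → ℝ) :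
    ‖y‖ ^ 2 - ∑ k, ⟪e k, y⟫ ^ 2 ≤ ‖y - ∑ k, c k • e k‖ ^ 2 := by
  rw [he.norm_sub_sum_smul_sq]
  linarith [sum_nonneg fun k (_ : k ∈ univ) => sq_nonneg (c k - ⟪e k, y⟫)]

theorem Orthonormal.norm_sub_sum_inner_smul_sq {ι : Type*} [Fintype ι] {e : ι → E}
    (he : Orthonormal ℝ e) (y : E) :
    ‖y - ∑ k, ⟪e k, y⟫ • e k‖ ^ 2 = ‖y‖ ^ 2 - ∑ k, ⟪e k, y⟫ ^ 2 := by
  simp [he.norm_sub_sum_smul_sq]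

theorem exists_orthonormal_expansion_of_mem_span_range {ι : Type*} [Fintype ι] (g : ι → E) :
    ∃ (r : ℕ) (e : Fin r → E), r ≤ Fintype.card ι ∧ Orthonormal ℝ e ∧
      ∀ v ∈ Submodule.span ℝ (Set.range g), ∃ c : Fin r → ℝ, v = ∑ k, c k • e k := by
  set V := Submodule.span ℝ (Set.range g)
  have : FiniteDimensional ℝ V := FiniteDimensional.span_of_finite ℝ (Set.finite_range g)
  set β := stdOrthonormalBasis ℝ V
  refine ⟨_, fun k => β k, finrank_range_le_card g, β.orthonormal.comp_linearIsometry V.subtypeₗᵢ,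
    fun v hv => ⟨fun k => ⟪β k, ⟨v, hv⟩⟫, ?_⟩⟩
  simpa using congrArg Subtype.val (β.sum_repr' ⟨v, hv⟩).symm

namespace LinearMap

variable [FiniteDimensional ℝ E] {D : ℕ} {T : E →ₗ[ℝ] E}

theorem IsSymmetric.inner_apply_self_eq_sum_eigenvalues (hT : T.IsSymmetric)
    (hn : Module.finrank ℝ E = D) (v : E) :
    ⟪v, T v⟫ = ∑ i, hT.eigenvalues hn i * ⟪hT.eigenvectorBasis hn i, v⟫ ^ 2 := by
  rw [← (hT.eigenvectorBasis hn).sum_inner_mul_inner v (T v)]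
  refine sum_congr rfl fun i _ => ?_
  rw [← hT, hT.apply_eigenvectorBasis, real_inner_smul_left, real_inner_comm,
    RCLike.ofReal_real_eq_id, id_eq]
  ring

theorem IsSymmetric.inner_eigenvectorBasis_apply (hT : T.IsSymmetric)
    (hn : Module.finrank ℝ E = D) (i : Fin D) :
    ⟪hT.eigenvectorBasis hn i, T (hT.eigenvectorBasis hn i)⟫ = hT.eigenvalues hn i := by
  simp [hT.apply_eigenvectorBasis, real_inner_smul_right]

/-- Ky Fan's maximum principle. -/
theorem IsPositive.sum_inner_apply_le_sum_eigenvalues (hT : T.IsPositive)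
    (hn : Module.finrank ℝ E = D) {ι : Type*} [Fintype ι] {e : ι → E} (he : Orthonormal ℝ e)
    {b : ℕ} (hb : Fintype.card ι ≤ b) :
    ∑ k, ⟪e k, T (e k)⟫ ≤
      ∑ i : Fin D, if (i : ℕ) < b then hT.isSymmetric.eigenvalues hn i else 0 := by
  set U := hT.isSymmetric.eigenvectorBasis hn
  set t : Fin D → ℝ := fun i => ∑ k, ⟪U i, e k⟫ ^ 2
  have hsum : ∑ k, ⟪e k, T (e k)⟫ = ∑ i, hT.isSymmetric.eigenvalues hn i * t i := by
    simp only [hT.isSymmetric.inner_apply_self_eq_sum_eigenvalues hn, t, mul_sum]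
    exact sum_comm
  have ht1 (i : Fin D) : t i ≤ 1 := by
    simpa [t, real_inner_comm] using he.sum_inner_products_le (U i) (s := univ)
  have htb : ∑ i, t i ≤ b := by
    have hparseval (x : E) : ∑ i, ⟪U i, x⟫ ^ 2 = ‖x‖ ^ 2 := by
      rw [← real_inner_self_eq_norm_sq, ← U.sum_inner_mul_inner x x]
      simp [sq, real_inner_comm]
    simp only [t]
    rw [sum_comm]
    simpa [hparseval, he.1] using hb
  rw [hsum]
  exact sum_mul_le_sum_ite_lt_of_antitone (hT.isSymmetric.eigenvalues_antitone hn)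
    (hT.nonneg_eigenvalues hn) (fun i => sum_nonneg fun k _ => sq_nonneg _) ht1 htb

end LinearMap

section Scatter

variable {J : Type*} [Fintype J]

/-- `Y Yᵀ`, for the matrix `Y` with columns `yⱼ`. -/
noncomputable def scatter (y : J → E) : E →ₗ[ℝ] E :=
  ∑ j, (InnerProductSpace.rankOne ℝ (y j) (y j) : E →L[ℝ] E).toLinearMap

theorem inner_scatter_apply (y : J → E) (v : E) : ⟪v, scatter y v⟫ = ∑ j, ⟪y j, v⟫ ^ 2 := by
  simp [scatter, inner_sum, real_inner_smul_right, sq, real_inner_comm]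

theorem isPositive_scatter (y : J → E) : (scatter y).IsPositive :=
  LinearMap.isPositive_sum _ fun _ _ =>
    (ContinuousLinearMap.isPositive_toLinearMap_iff _).mpr
      (InnerProductSpace.isPositive_rankOne_self _)

end Scatter

section EckartYoung

variable [FiniteDimensional ℝ E] {D : ℕ} (hn : Module.finrank ℝ E = D) {J : Type*} [Fintype J]
  (y : J → E)

theorem sum_norm_sq_sub_sum_eigenvalues_le {b : ℕ} (g : Fin b → E) (c : J → Fin b → ℝ) :
    ∑ j, ‖y j‖ ^ 2 - ∑ i : Fin D,
        (if (i : ℕ) < b then (isPositive_scatter y).isSymmetric.eigenvalues hn i else 0)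
      ≤ ∑ j, ‖y j - ∑ k, c j k • g k‖ ^ 2 := by
  obtain ⟨r, e, hrb, he, hspan⟩ := exists_orthonormal_expansion_of_mem_span_range g
  have hproj (j : J) : ‖y j‖ ^ 2 - ∑ k, ⟪e k, y j⟫ ^ 2 ≤ ‖y j - ∑ k, c j k • g k‖ ^ 2 := by
    obtain ⟨d, hd⟩ := hspan (∑ k, c j k • g k) <| Submodule.sum_mem _ fun k _ =>
      Submodule.smul_mem _ _ (Submodule.subset_span ⟨k, rfl⟩)
    rw [hd]
    exact he.norm_sq_sub_sum_inner_sq_le (y j) d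
  have hkyFan := (isPositive_scatter y).sum_inner_apply_le_sum_eigenvalues hn he
    (b := b) (by simpa using hrb)
  simp only [inner_scatter_apply, real_inner_comm (e _)] at hkyFan
  have hsum := sum_le_sum fun j (_ : j ∈ univ) => hproj j
  rw [sum_sub_distrib, sum_comm (s := univ) (t := univ)] at hsum
  linarith

theorem sum_norm_sub_eigenvectorBasis_sq {b : ℕ} (hb : b ≤ D) :
    ∑ j, ‖y j - ∑ k : Fin b,
          ⟪(isPositive_scatter y).isSymmetric.eigenvectorBasis hn (Fin.castLE hb k), y j⟫ •
            (isPositive_scatter y).isSymmetric.eigenvectorBasis hn (Fin.castLE hb k)‖ ^ 2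
      = ∑ j, ‖y j‖ ^ 2 - ∑ i : Fin D,
          if (i : ℕ) < b then (isPositive_scatter y).isSymmetric.eigenvalues hn i else 0 := by
  set hT := (isPositive_scatter y).isSymmetric
  have he : Orthonormal ℝ fun k => hT.eigenvectorBasis hn (Fin.castLE hb k) :=
    (hT.eigenvectorBasis hn).orthonormal.comp _ (Fin.castLE_injective hb)
  rw [sum_congr rfl fun j _ => he.norm_sub_sum_inner_smul_sq (y j), sum_sub_distrib,
    Fin.sum_ite_val_lt hb, sum_comm]
  simp only [← hT.inner_eigenvectorBasis_apply hn, inner_scatter_apply, real_inner_comm (y _)]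

end EckartYoung

end InnerProductSpace

theorem le_of_sum_mul_le_of_forall_le {ι α : Type*} [Fintype ι] {w : ι → ℝ}
    (hw : ∀ i, 0 < w i) {f : ι → α → ℝ} {a₀ a : α} (ha₀ : ∀ i x, f i a₀ ≤ f i x)
    (ha : ∑ i, w i * f i a ≤ ∑ i, w i * f i a₀) (i : ι) (x : α) : f i a ≤ f i x := by
  by_contra! hlt
  have : ∑ i, w i * f i a₀ < ∑ i, w i * f i a :=
    sum_lt_sum (fun j _ => mul_le_mul_of_nonneg_left (ha₀ j a) (hw j).le)
      ⟨i, mem_univ i, mul_lt_mul_of_pos_left ((ha₀ i x).trans_lt hlt) (hw i)⟩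
  linarith

noncomputable def colVec {m n : ℕ} (A : Matrix (Fin m) (Fin n) ℝ) (j : Fin n) :
    EuclideanSpace ℝ (Fin m) :=
  WithLp.toLp 2 fun i => A i j

theorem truncCost_eq_sum_norm_sq {D N K b : ℕ} (Y : Matrix (Fin D) (Fin N) ℝ)
    (X : Matrix (Fin K) (Fin N) ℝ) (G : Matrix (Fin D) (Fin K) ℝ) (hb : b ≤ K) :
    truncCost Y X G b =
      ∑ j, ‖colVec Y j - ∑ k : Fin b, X (Fin.castLE hb k) j • colVec G (Fin.castLE hb k)‖ ^ 2 := by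
  rw [truncCost, sum_comm]
  refine sum_congr rfl fun j _ => ?_
  rw [EuclideanSpace.norm_sq_eq]
  refine sum_congr rfl fun i _ => ?_
  simp [colVec, Fin.sum_ite_val_lt hb, mul_comm]

theorem exists_forall_truncCost_le {D N K : ℕ} (hKD : K ≤ D) (Y : Matrix (Fin D) (Fin N) ℝ) :
    ∃ (X₀ : Matrix (Fin K) (Fin N) ℝ) (G₀ : Matrix (Fin D) (Fin K) ℝ),
      ∀ b ≤ K, ∀ (X : Matrix (Fin K) (Fin N) ℝ) (G : Matrix (Fin D) (Fin K) ℝ),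
        truncCost Y X₀ G₀ b ≤ truncCost Y X G b := by
  have hn : Module.finrank ℝ (EuclideanSpace ℝ (Fin D)) = D := finrank_euclideanSpace_fin
  set U := (isPositive_scatter (colVec Y)).isSymmetric.eigenvectorBasis hn
  refine ⟨.of fun k j => ⟪U (Fin.castLE hKD k), colVec Y j⟫,
    .of fun i k => U (Fin.castLE hKD k) i, fun b hb X G => ?_⟩
  rw [truncCost_eq_sum_norm_sq _ _ _ hb, truncCost_eq_sum_norm_sq _ _ _ hb]
  calc _ = _ := sum_norm_sub_eigenvectorBasis_sq hn (colVec Y) (hb.trans hKD)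
    _ ≤ _ := sum_norm_sq_sub_sum_eigenvalues_le hn (colVec Y) _ _

theorem nd_minimizer_minimizes_every_truncation_general
    {D N K : ℕ} (hKD : K ≤ D)
    (Y : Matrix (Fin D) (Fin N) ℝ) (p : Fin K → ℝ)
    (hp : ∀ b, 0 < p b)
    (Xs : Matrix (Fin K) (Fin N) ℝ) (Gs : Matrix (Fin D) (Fin K) ℝ)
    (hmin : ∀ (X : Matrix (Fin K) (Fin N) ℝ) (G : Matrix (Fin D) (Fin K) ℝ),
      ndCost Y p Xs Gs ≤ ndCost Y p X G) :
    ∀ (b : Fin K) (X : Matrix (Fin K) (Fin N) ℝ) (G : Matrix (Fin D) (Fin K) ℝ),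
      truncCost Y Xs Gs ((b : ℕ) + 1) ≤ truncCost Y X G ((b : ℕ) + 1) := by
  obtain ⟨X₀, G₀, hX₀G₀⟩ := exists_forall_truncCost_le hKD Y
  have hnd := hmin X₀ G₀
  unfold ndCost at hnd
  intro b X G
  exact le_of_sum_mul_le_of_forall_le
    (f := fun c (XG : Matrix (Fin K) (Fin N) ℝ × Matrix (Fin D) (Fin K) ℝ) =>
      truncCost Y XG.1 XG.2 ((c : ℕ) + 1))
    (a₀ := (X₀, G₀)) (a := (Xs, Gs)) hp (fun c XG => hX₀G₀ _ c.isLt XG.1 XG.2) hnd b (X, G)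

/-- Every global minimizer of the nested dropout cost is, for every `b ∈ {1,…,K}`,
a global minimizer of the `b`-truncation cost. -/
theorem nd_minimizer_minimizes_every_truncation
    {D N K : ℕ} (hK : 1 ≤ K) (hKD : K ≤ D)
    (Y : Matrix (Fin D) (Fin N) ℝ) (p : Fin K → ℝ)
    (hp : ∀ b, 0 < p b) (hsum : ∑ b, p b = 1)
    (Xs : Matrix (Fin K) (Fin N) ℝ) (Gs : Matrix (Fin D) (Fin K) ℝ)
    (hmin : ∀ (X : Matrix (Fin K) (Fin N) ℝ) (G : Matrix (Fin D) (Fin K) ℝ),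
      ndCost Y p Xs Gs ≤ ndCost Y p X G) :
    ∀ (b : Fin K) (X : Matrix (Fin K) (Fin N) ℝ) (G : Matrix (Fin D) (Fin K) ℝ),
      truncCost Y Xs Gs ((b : ℕ) + 1) ≤ truncCost Y X G ((b : ℕ) + 1) :=
  nd_minimizer_minimizes_every_truncation_general hKD Y p hp Xs Gs hmin
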